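/- Let T be a tree with maximum degree at most 4 and no vertex of degree 2 that admits a convex rectilinear planar drawing. Then T has at most four vertices that are 2-forks or 3-forks; in particular, T does not contain five pairwise vertex-disjoint subtrees each of which contains a 2-fork or a 3-fork of T. -/

import Mathlib

open SimpleGraph

namespace TurnRegular

/-- Degree of a vertex: the cardinality of its neighbor set. -/
noncomputable def deg {V : Type*} (G : SimpleGraph V) (v : V) : ℕ :=
  (G.neighborSet v).ncard

/-- A splitter: a vertex adjacent to at least three non-leaf vertices. -/
def IsSplitter {V : Type*} (G : SimpleGraph V) (v : V) : Prop :=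
  3 ≤ {u | G.Adj v u ∧ 2 ≤ deg G u}.ncard

/-- A `k`-fork: a vertex of degree exactly `k+1` adjacent to at least `k` leaves. -/
def IsKFork {V : Type*} (k : ℕ) (G : SimpleGraph V) (v : V) : Prop :=
  deg G v = k + 1 ∧ k ≤ {u | G.Adj v u ∧ deg G u = 1}.ncard

/-- A `k`-caterpillar: a tree with at least three vertices whose non-leaf vertices
form the vertex set of a path, every non-leaf vertex having degree between `3` and `k`. -/
def IsKCaterpillar (k : ℕ) {W : Type*} (G : SimpleGraph W) : Prop :=
  G.IsTree ∧ 3 ≤ Nat.card W ∧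
  (∃ (a b : W) (p : G.Walk a b), p.IsPath ∧ ∀ v, 2 ≤ deg G v ↔ v ∈ p.support) ∧
  (∀ v, 2 ≤ deg G v → 3 ≤ deg G v ∧ deg G v ≤ k)

/-- The vertex set of the connected component of `G - v` containing `u`
(for `u ≠ v`): all vertices reachable from `u` by a walk avoiding `v`. -/
def compAway {V : Type*} (G : SimpleGraph V) (v u : V) : Set V :=
  {w | ∃ p : G.Walk u w, v ∉ p.support}

/-- Vertex set of the branch of `G` at `v` through the component of `G - v`
containing `u`. -/
def branchVerts {V : Type*} (G : SimpleGraph V) (v u : V) : Set V :=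
  insert v (compAway G v u)

/-- The branch of `G` at `v` through the component of `G - v` containing `u`:
the subgraph induced on `{v} ∪ C`. -/
def branch {V : Type*} (G : SimpleGraph V) (v u : V) :
    SimpleGraph (branchVerts G v u) :=
  G.induce (branchVerts G v u)

/-- A 4-windmill: a tree of maximum degree at most 4 with exactly one splitter `v`,
such that `v` has degree 4 and each of the four branches at `v` is a 3-caterpillar. -/
def Is4Windmill {V : Type*} (G : SimpleGraph V) : Prop :=
  G.IsTree ∧ (∀ w, deg G w ≤ 4) ∧
  ∃ v, (∀ w, IsSplitter G w ↔ w = v) ∧ deg G v = 4 ∧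
    ∀ u, G.Adj v u → IsKCaterpillar 3 (branch G v u)

/-- A 3-windmill: a tree of maximum degree at most 4 with exactly one splitter `v`,
such that `v` has exactly three non-leaf neighbors, every other neighbor of `v`
is a leaf, and among the three branches at `v` through the components containing
the non-leaf neighbors, two are 3-caterpillars and one is a 4-caterpillar. -/
def Is3Windmill {V : Type*} (G : SimpleGraph V) : Prop :=
  G.IsTree ∧ (∀ w, deg G w ≤ 4) ∧
  ∃ v, (∀ w, IsSplitter G w ↔ w = v) ∧
    ∃ u₁ u₂ u₃, u₁ ≠ u₂ ∧ u₁ ≠ u₃ ∧ u₂ ≠ u₃ ∧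
      G.Adj v u₁ ∧ G.Adj v u₂ ∧ G.Adj v u₃ ∧
      2 ≤ deg G u₁ ∧ 2 ≤ deg G u₂ ∧ 2 ≤ deg G u₃ ∧
      (∀ u, G.Adj v u → 2 ≤ deg G u → u = u₁ ∨ u = u₂ ∨ u = u₃) ∧
      (∀ u, G.Adj v u → u ≠ u₁ → u ≠ u₂ → u ≠ u₃ → deg G u = 1) ∧
      IsKCaterpillar 3 (branch G v u₁) ∧ IsKCaterpillar 3 (branch G v u₂) ∧
      IsKCaterpillar 4 (branch G v u₃)

/-- A double-windmill: a tree of maximum degree at most 4 with exactly two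
splitters `u` and `v` such that (i) every vertex strictly between `u` and `v`
on the `u`–`v` path is adjacent, apart from its neighbors on the path, only
to leaves; (ii) each of `u` and `v` has exactly three non-leaf neighbors and
every other neighbor is a leaf; (iii) for each of `u` and `v`, the two branches
at it through the components that contain one of its non-leaf neighbors but not
the other splitter are 3-caterpillars. -/
def IsDoubleWindmill {V : Type*} (G : SimpleGraph V) : Prop :=
  G.IsTree ∧ (∀ w, deg G w ≤ 4) ∧
  ∃ u v, u ≠ v ∧ (∀ w, IsSplitter G w ↔ (w = u ∨ w = v)) ∧
    (∀ p : G.Walk u v, p.IsPath →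
      ∀ w ∈ p.support, w ≠ u → w ≠ v →
        ∀ x, G.Adj w x → x ∉ p.support → deg G x = 1) ∧
    {x | G.Adj u x ∧ 2 ≤ deg G x}.ncard = 3 ∧
    {x | G.Adj v x ∧ 2 ≤ deg G x}.ncard = 3 ∧
    (∀ x, G.Adj u x → deg G x = 1 ∨ 2 ≤ deg G x) ∧
    (∀ x, G.Adj v x → deg G x = 1 ∨ 2 ≤ deg G x) ∧
    (∀ x, G.Adj u x → 2 ≤ deg G x → v ∉ branchVerts G u x →
      IsKCaterpillar 3 (branch G u x)) ∧
    (∀ x, G.Adj v x → 2 ≤ deg G x → u ∉ branchVerts G v x →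
      IsKCaterpillar 3 (branch G v x))

/-- The closed axis-parallel ray starting at `p` and passing through `q`
(extended to infinity beyond `q`). -/
def ray (p q : ℝ × ℝ) : Set (ℝ × ℝ) :=
  {x | ∃ t : ℝ, 0 ≤ t ∧ x = p + t • (q - p)}

/-- A rectilinear planar drawing of `G`: an injective placement of the vertices
in the plane such that each edge is a horizontal or vertical segment, and the
segments of two distinct edges meet at most in the image of a common endpoint. -/
def IsRectDrawing {V : Type*} (G : SimpleGraph V) (Γ : V → ℝ × ℝ) : Prop :=
  Function.Injective Γ ∧
  (∀ u v, G.Adj u v → (Γ u).1 = (Γ v).1 ∨ (Γ u).2 = (Γ v).2) ∧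
  (∀ u v x y, G.Adj u v → G.Adj x y → s(u, v) ≠ s(x, y) →
    ∀ p ∈ segment ℝ (Γ u) (Γ v) ∩ segment ℝ (Γ x) (Γ y),
      ∃ w, (w = u ∨ w = v) ∧ (w = x ∨ w = y) ∧ p = Γ w)

/-- The drawn point set of edge `{a, b}` in the drawing `Γ`: its segment, where
the edge is extended beyond each leaf endpoint to an infinite axis-parallel ray. -/
noncomputable def edgeDrawn {V : Type*} (G : SimpleGraph V) (Γ : V → ℝ × ℝ)
    (a b : V) : Set (ℝ × ℝ) :=
  (if deg G b = 1 then ray (Γ a) (Γ b) else segment ℝ (Γ a) (Γ b)) ∪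
  (if deg G a = 1 then ray (Γ b) (Γ a) else segment ℝ (Γ a) (Γ b))

/-- A convex rectilinear planar drawing: a rectilinear planar drawing in which,
after extending every edge incident to a leaf beyond that leaf to an infinite
axis-parallel ray, the resulting point sets of two distinct edges still meet at
most in the image of a common endpoint. -/
def IsConvexRectDrawing {V : Type*} (G : SimpleGraph V) (Γ : V → ℝ × ℝ) : Prop :=
  IsRectDrawing G Γ ∧
  (∀ u v x y, G.Adj u v → G.Adj x y → s(u, v) ≠ s(x, y) →
    ∀ p ∈ edgeDrawn G Γ u v ∩ edgeDrawn G Γ x y,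
      ∃ w, (w = u ∨ w = v) ∧ (w = x ∨ w = y) ∧ p = Γ w)

/-- `G` admits a convex rectilinear planar drawing. -/
def HasConvexDrawing {V : Type*} (G : SimpleGraph V) : Prop :=
  ∃ Γ : V → ℝ × ℝ, IsConvexRectDrawing G Γ

/-!
Every edge is drawn horizontally or vertically, and in a convex drawing no edge meets the ray
that extends a leaf edge. Two leaf rays at a fork either are perpendicular (a *quad fork*: no
vertex lies in the open quadrant between them) or, up to exchanging the axes, point in opposite
horizontal directions, and then the fork is a 2-fork whose third edge is vertical (a *line fork*:
every other vertex lies strictly on the side of its third edge). Two quad forks with the same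
orientation are impossible, since a horizontal ray of one would meet a vertical ray of the other;
so without line forks there are at most four forks. A line fork whose third edge points towards
`σ` forces every vertical leaf ray elsewhere to point towards `σ` as well, which leaves room only
for two quad forks besides at most two line forks.
-/

section Plane

lemma mul_nonneg_of_mul_pos_of_mul_nonneg {ε x y : ℝ} (hx : 0 < ε * x) (hy : 0 ≤ ε * y) :
    0 ≤ x * y := by
  have hε : ε ≠ 0 := by rintro rfl; simp at hx
  refine nonneg_of_mul_nonneg_left ?_ (mul_self_pos.mpr hε)
  nlinarith [mul_nonneg hx.le hy]

def IsHorizontalFrom (p q : ℝ × ℝ) (ε : ℝ) : Prop :=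
  q.2 = p.2 ∧ 0 < ε * (q.1 - p.1)

def quadrant (o : ℝ × ℝ) (ε δ : ℝ) : Set (ℝ × ℝ) :=
  {p | 0 < ε * (p.1 - o.1) ∧ 0 < δ * (p.2 - o.2)}

lemma swap_mem_ray_swap {p q x : ℝ × ℝ} : x.swap ∈ ray p.swap q.swap ↔ x ∈ ray p q :=
  exists_congr fun t => and_congr_right fun _ =>
    (Prod.swap_injective.eq_iff (b := p + t • (q - p)) :)

lemma swap_mem_segment_swap {p q x : ℝ × ℝ} :
    x.swap ∈ segment ℝ p.swap q.swap ↔ x ∈ segment ℝ p q :=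
  exists_congr fun s => exists_congr fun t => and_congr_right fun _ =>
    and_congr_right fun _ => and_congr_right fun _ =>
      (Prod.swap_injective.eq_iff (a := s • p + t • q) :)

lemma segment_subset_ray (p q : ℝ × ℝ) : segment ℝ p q ⊆ ray p q := by
  rintro x ⟨s, t, -, ht, hst, rfl⟩
  refine ⟨t, ht, ?_⟩
  obtain rfl : s = 1 - t := by linarith
  module

lemma mem_ray_of_isHorizontalFrom {p q : ℝ × ℝ} {ε z : ℝ} (hq : IsHorizontalFrom p q ε)
    (hz : 0 ≤ ε * (z - p.1)) : (z, p.2) ∈ ray p q := by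
  obtain ⟨h2, h1⟩ := hq
  refine ⟨ε * (z - p.1) / (ε * (q.1 - p.1)), div_nonneg hz h1.le, ?_⟩
  have hε : ε ≠ 0 := by rintro rfl; simp at h1
  have hq : q.1 - p.1 ≠ 0 := by rintro h; simp [h] at h1
  ext
  · simp only [Prod.fst_add, Prod.smul_fst, Prod.fst_sub, smul_eq_mul]
    field_simp
    ring
  · simp [h2]

lemma mem_segment_of_mul_nonpos {p q : ℝ × ℝ} {z : ℝ} (h2 : p.2 = q.2)
    (hz : (p.1 - z) * (q.1 - z) ≤ 0) : (z, p.2) ∈ segment ℝ p q := by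
  obtain ⟨p1, p2⟩ := p
  obtain ⟨q1, q2⟩ := q
  dsimp only at h2 hz ⊢
  subst h2
  rw [← Prod.image_mk_segment_left, segment_eq_uIcc]
  refine ⟨z, Set.mem_uIcc.mpr ?_, rfl⟩
  rcases mul_nonpos_iff.mp hz with ⟨h1, h2⟩ | ⟨h1, h2⟩
  · exact Or.inr ⟨by linarith, by linarith⟩
  · exact Or.inl ⟨by linarith, by linarith⟩

lemma mem_ray_union_ray {o a b : ℝ × ℝ} (ha : IsHorizontalFrom o a 1)
    (hb : IsHorizontalFrom o b (-1)) (z : ℝ) : (z, o.2) ∈ ray o a ∪ ray o b := by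
  rcases le_total 0 (z - o.1) with h | h
  · exact Or.inl (mem_ray_of_isHorizontalFrom ha (by linarith))
  · exact Or.inr (mem_ray_of_isHorizontalFrom hb (by linarith))

lemma segment_inter_ray_nonempty_of_quadrant {o b p q : ℝ × ℝ} {ε δ : ℝ}
    (hb : IsHorizontalFrom o.swap b.swap δ) (hpq : p.2 = q.2)
    (hp : p ∈ quadrant o ε δ) (hq : q ∉ quadrant o ε δ) :
    (segment ℝ p q ∩ ray o b).Nonempty := by
  have hq1 : ε * (q.1 - o.1) ≤ 0 := by
    by_contra! h
    exact hq ⟨h, hpq ▸ hp.2⟩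
  refine ⟨(o.1, p.2), mem_segment_of_mul_nonpos hpq ?_, ?_⟩
  · have := mul_nonneg_of_mul_pos_of_mul_nonneg hp.1 (by linarith : 0 ≤ ε * (o.1 - q.1))
    nlinarith
  · exact swap_mem_ray_swap.mp (mem_ray_of_isHorizontalFrom hb hp.2.le)

lemma segment_inter_rays_nonempty_of_quadrant {o a b p q : ℝ × ℝ} {ε δ : ℝ}
    (ha : IsHorizontalFrom o a ε) (hb : IsHorizontalFrom o.swap b.swap δ)
    (hpq : p.1 = q.1 ∨ p.2 = q.2) (hp : p ∈ quadrant o ε δ) (hq : q ∉ quadrant o ε δ) :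
    (segment ℝ p q ∩ (ray o a ∪ ray o b)).Nonempty := by
  rcases hpq with hpq | hpq
  · obtain ⟨x, hx, hxa⟩ := segment_inter_ray_nonempty_of_quadrant (o := o.swap) (b := a.swap)
      (p := p.swap) (q := q.swap) ha hpq hp.symm (fun h => hq h.symm)
    refine ⟨x.swap, ?_, Or.inl ?_⟩
    · exact swap_mem_segment_swap.mp hx
    · exact swap_mem_ray_swap.mp hxa
  · obtain ⟨x, hx, hxb⟩ := segment_inter_ray_nonempty_of_quadrant hb hpq hp hq
    exact ⟨x, hx, Or.inr hxb⟩

lemma segment_inter_rays_nonempty_of_halfPlane {o a b p q : ℝ × ℝ} {σ : ℝ}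
    (ha : IsHorizontalFrom o a 1) (hb : IsHorizontalFrom o b (-1))
    (hpq : p.1 = q.1 ∨ p.2 = q.2) (hp : σ * (p.2 - o.2) < 0) (hq : ¬ σ * (q.2 - o.2) < 0) :
    (segment ℝ p q ∩ (ray o a ∪ ray o b)).Nonempty := by
  rcases hpq with hpq | hpq
  · refine ⟨(p.1, o.2), swap_mem_segment_swap.mp (mem_segment_of_mul_nonpos hpq ?_),
      mem_ray_union_ray ha hb p.1⟩
    have := mul_nonneg_of_mul_pos_of_mul_nonneg (by linarith : 0 < -σ * (p.2 - o.2))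
      (by linarith : 0 ≤ -σ * (o.2 - q.2))
    dsimp only [Prod.fst_swap, Prod.snd_swap]
    nlinarith
  · exact absurd (hpq ▸ hp) hq

end Plane

section Drawing

variable {V : Type*} {G : SimpleGraph V} {Γ : V → ℝ × ℝ}

lemma eq_of_adj_of_deg_eq_one {a x y : V} (ha : deg G a = 1) (hx : G.Adj a x)
    (hy : G.Adj a y) : x = y := by
  obtain ⟨z, hz⟩ := Set.ncard_eq_one.mp ha
  have hx' : x ∈ G.neighborSet a := hx
  have hy' : y ∈ G.neighborSet a := hy
  rw [hz] at hx' hy'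
  exact hx'.trans hy'.symm

lemma segment_subset_edgeDrawn (a b : V) : segment ℝ (Γ a) (Γ b) ⊆ edgeDrawn G Γ a b := by
  intro x hx
  unfold edgeDrawn
  left
  split_ifs
  exacts [segment_subset_ray _ _ hx, hx]

lemma ray_subset_edgeDrawn {a b : V} (hb : deg G b = 1) :
    ray (Γ a) (Γ b) ⊆ edgeDrawn G Γ a b := by
  intro x hx
  unfold edgeDrawn
  rw [if_pos hb]
  exact Or.inl hx

lemma IsConvexRectDrawing.disjoint_edgeDrawn (hΓ : IsConvexRectDrawing G Γ) {u v x y : V}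
    (huv : G.Adj u v) (hxy : G.Adj x y) (hux : u ≠ x) (huy : u ≠ y) (hvx : v ≠ x)
    (hvy : v ≠ y) : Disjoint (edgeDrawn G Γ u v) (edgeDrawn G Γ x y) := by
  refine Set.disjoint_left.mpr fun p hp hp' => ?_
  have hne : s(u, v) ≠ s(x, y) := by
    simp only [ne_eq, Sym2.eq_iff]
    tauto
  obtain ⟨w, hw, hw', -⟩ := hΓ.2 u v x y huv hxy hne p ⟨hp, hp'⟩
  rcases hw with rfl | rfl <;> rcases hw' with rfl | rfl <;> contradiction

lemma IsRectDrawing.eq_of_isHorizontalFrom (hΓ : IsRectDrawing G Γ) {v a b : V} {ε : ℝ}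
    (ha : G.Adj v a) (hb : G.Adj v b) (hva : IsHorizontalFrom (Γ v) (Γ a) ε)
    (hvb : IsHorizontalFrom (Γ v) (Γ b) ε) : a = b := by
  wlog hab : ε * (Γ a).1 ≤ ε * (Γ b).1 generalizing a b
  · exact (this hb ha hvb hva (le_of_not_ge hab)).symm
  by_contra hne
  have hmem : Γ a ∈ segment ℝ (Γ v) (Γ b) := by
    have := mul_nonneg_of_mul_pos_of_mul_nonneg hva.2 (by linarith : 0 ≤ ε * ((Γ b).1 - (Γ a).1))
    have := mem_segment_of_mul_nonpos (z := (Γ a).1) hvb.1.symm (by nlinarith)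
    rwa [← hva.1] at this
  obtain ⟨w, hw, hw', haw⟩ := hΓ.2.2 v a v b ha hb (mt Sym2.congr_right.mp hne) (Γ a)
    ⟨right_mem_segment ℝ _ _, hmem⟩
  have hwv : w = v := by
    rcases hw with hw | rfl
    · exact hw
    · rcases hw' with h | h
      exacts [h, absurd h hne]
  exact ha.ne (hΓ.1 (haw.trans (congrArg Γ hwv))).symm

lemma IsRectDrawing.exists_isHorizontalFrom (hΓ : IsRectDrawing G Γ) {v x : V} (h : G.Adj v x)
    (h2 : (Γ x).2 = (Γ v).2) :
    ∃ s : ℝ, (s = 1 ∨ s = -1) ∧ IsHorizontalFrom (Γ v) (Γ x) s := by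
  have h1 : (Γ x).1 ≠ (Γ v).1 := fun h1 => h.ne (hΓ.1 (Prod.ext h1 h2)).symm
  rcases h1.lt_or_gt with hlt | hgt
  · exact ⟨-1, Or.inr rfl, h2, by linarith⟩
  · exact ⟨1, Or.inl rfl, h2, by linarith⟩

lemma mem_edgeDrawn_swap {a b : V} {x : ℝ × ℝ} :
    x ∈ edgeDrawn G (Prod.swap ∘ Γ) a b ↔ x.swap ∈ edgeDrawn G Γ a b := by
  unfold edgeDrawn
  split_ifs <;>
    simp only [Set.mem_union, Function.comp_apply, ← swap_mem_ray_swap (x := x.swap),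
      ← swap_mem_segment_swap (x := x.swap), Prod.swap_swap]

lemma IsConvexRectDrawing.swap (hΓ : IsConvexRectDrawing G Γ) :
    IsConvexRectDrawing G (Prod.swap ∘ Γ) := by
  obtain ⟨⟨hinj, haxis, hrect⟩, hconv⟩ := hΓ
  refine ⟨⟨Prod.swap_injective.comp hinj, fun u v h => (haxis u v h).symm, ?_⟩, ?_⟩
  · intro u v x y huv hxy hne p ⟨hp, hp'⟩
    obtain ⟨w, hw, hw', hpw⟩ := hrect u v x y huv hxy hne p.swap
      ⟨swap_mem_segment_swap.mp (by simpa using hp), swap_mem_segment_swap.mp (by simpa using hp')⟩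
    exact ⟨w, hw, hw', by simp [← hpw]⟩
  · intro u v x y huv hxy hne p ⟨hp, hp'⟩
    obtain ⟨w, hw, hw', hpw⟩ := hconv u v x y huv hxy hne p.swap
      ⟨mem_edgeDrawn_swap.mp hp, mem_edgeDrawn_swap.mp hp'⟩
    exact ⟨w, hw, hw', by simp [← hpw]⟩

lemma IsConvexRectDrawing.apply_notMem_ray (hΓ : IsConvexRectDrawing G Γ) (hG : G.Preconnected)
    {v a x : V} (ha : G.Adj v a) (ha1 : deg G a = 1) (hxv : x ≠ v) (hxa : x ≠ a) :
    Γ x ∉ ray (Γ v) (Γ a) := by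
  intro hx
  obtain ⟨y, hxy⟩ : ∃ y, G.Adj x y := by
    obtain ⟨w⟩ := hG x v
    cases w with
    | nil => exact absurd rfl hxv
    | cons h _ => exact ⟨_, h⟩
  have hne : s(x, y) ≠ s(v, a) := by
    simp only [ne_eq, Sym2.eq_iff]
    tauto
  obtain ⟨w, hw, hw', hxw⟩ := hΓ.2 x y v a hxy ha hne (Γ x)
    ⟨segment_subset_edgeDrawn x y (left_mem_segment ℝ _ _), ray_subset_edgeDrawn ha1 hx⟩
  rcases hw with rfl | rfl
  · rcases hw' with rfl | rfl <;> contradiction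
  · exact hxy.ne (hΓ.1.1 hxw)

/-- Since no edge crosses a leaf ray, a walk from a vertex drawn in `P` to `v` can only
leave `P` through a neighbour of `v`. -/
lemma IsConvexRectDrawing.apply_notMem_of_barrier (hΓ : IsConvexRectDrawing G Γ)
    (hG : G.Preconnected) {v a b : V} (ha : G.Adj v a) (ha1 : deg G a = 1) (hb : G.Adj v b)
    (hb1 : deg G b = 1) {P : Set (ℝ × ℝ)} (hv : Γ v ∉ P) (hnbr : ∀ x, G.Adj v x → Γ x ∉ P)
    (hcross : ∀ p q : ℝ × ℝ, (p.1 = q.1 ∨ p.2 = q.2) → p ∈ P → q ∉ P →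
      (segment ℝ p q ∩ (ray (Γ v) (Γ a) ∪ ray (Γ v) (Γ b))).Nonempty)
    (x : V) : Γ x ∉ P := by
  obtain ⟨w⟩ := hG x v
  induction w with
  | nil => exact hv
  | @cons x y v hxy w ih =>
    specialize ih ha hb hv hnbr hcross
    intro hx
    have hxv : x ≠ v := by rintro rfl; exact hv hx
    have hyv : y ≠ v := by rintro rfl; exact hnbr x hxy.symm hx
    have hya : y ≠ a := by rintro rfl; exact hxv (eq_of_adj_of_deg_eq_one ha1 hxy.symm ha.symm)
    have hyb : y ≠ b := by rintro rfl; exact hxv (eq_of_adj_of_deg_eq_one hb1 hxy.symm hb.symm)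
    have hxa : x ≠ a := by rintro rfl; exact hyv (eq_of_adj_of_deg_eq_one ha1 hxy ha.symm)
    have hxb : x ≠ b := by rintro rfl; exact hyv (eq_of_adj_of_deg_eq_one hb1 hxy hb.symm)
    obtain ⟨p, hp, hpa | hpb⟩ := hcross (Γ x) (Γ y) (hΓ.1.2.1 x y hxy) hx ih
    · exact (hΓ.disjoint_edgeDrawn hxy ha hxv hxa hyv hya).ne_of_mem
        (segment_subset_edgeDrawn x y hp) (ray_subset_edgeDrawn ha1 hpa) rfl
    · exact (hΓ.disjoint_edgeDrawn hxy hb hxv hxb hyv hyb).ne_of_mem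
        (segment_subset_edgeDrawn x y hp) (ray_subset_edgeDrawn hb1 hpb) rfl

end Drawing

section Forks

variable {V : Type*} {G : SimpleGraph V} {Γ : V → ℝ × ℝ}

def IsHorizontalLeaf (G : SimpleGraph V) (Γ : V → ℝ × ℝ) (v a : V) (ε : ℝ) : Prop :=
  G.Adj v a ∧ deg G a = 1 ∧ IsHorizontalFrom (Γ v) (Γ a) ε

/- Vertical directions of `Γ` are the horizontal directions of the swapped drawing
`Prod.swap ∘ Γ`. -/
def IsQuadFork (G : SimpleGraph V) (Γ : V → ℝ × ℝ) (v : V) (ε δ : ℝ) : Prop :=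
  (∃ a, IsHorizontalLeaf G Γ v a ε) ∧ ∃ b, IsHorizontalLeaf G (Prod.swap ∘ Γ) v b δ

def IsLineFork (G : SimpleGraph V) (Γ : V → ℝ × ℝ) (v : V) (σ : ℝ) : Prop :=
  ∃ a b c, IsHorizontalLeaf G Γ v a 1 ∧ IsHorizontalLeaf G Γ v b (-1) ∧
    G.Adj v c ∧ IsHorizontalFrom (Γ v).swap (Γ c).swap σ ∧
    ∀ y, G.Adj v y → y = a ∨ y = b ∨ y = c

lemma IsQuadFork.deg_ne_one {v : V} {ε δ : ℝ} (h : IsQuadFork G Γ v ε δ) : deg G v ≠ 1 := by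
  obtain ⟨⟨a, ha, -, ha2, -⟩, b, hb, -, -, hb1⟩ := h
  intro hv
  obtain rfl := eq_of_adj_of_deg_eq_one hv ha hb
  simp [ha2] at hb1

lemma IsLineFork.deg_ne_one {v : V} {σ : ℝ} (h : IsLineFork G Γ v σ) : deg G v ≠ 1 := by
  obtain ⟨a, b, -, ⟨ha, -, -, ha1⟩, ⟨hb, -, -, hb1⟩, -⟩ := h
  intro hv
  obtain rfl := eq_of_adj_of_deg_eq_one hv ha hb
  linarith

lemma IsConvexRectDrawing.apply_notMem_quadrant (hΓ : IsConvexRectDrawing G Γ)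
    (hG : G.Preconnected) {v : V} {ε δ : ℝ} (h : IsQuadFork G Γ v ε δ)
    (x : V) : Γ x ∉ quadrant (Γ v) ε δ := by
  obtain ⟨⟨a, ha, ha1, hva⟩, b, hb, hb1, hvb⟩ := h
  refine hΓ.apply_notMem_of_barrier hG ha ha1 hb hb1 (by simp [quadrant]) (fun y hy => ?_)
    (fun p q hpq hp hq => segment_inter_rays_nonempty_of_quadrant hva hvb hpq hp hq) x
  rintro ⟨h1, h2⟩
  rcases hΓ.1.2.1 v y hy with h | h <;> simp [h] at h1 h2

lemma IsConvexRectDrawing.not_rays_meet_of_isQuadFork (hΓ : IsConvexRectDrawing G Γ)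
    {u v : V} {ε δ : ℝ} (hv : IsQuadFork G Γ v ε δ) (hu : IsQuadFork G Γ u ε δ) (huv : u ≠ v) :
    ¬ (0 ≤ ε * ((Γ u).1 - (Γ v).1) ∧ 0 ≤ δ * ((Γ v).2 - (Γ u).2)) := by
  rintro ⟨h1, h2⟩
  have hv1 := hv.deg_ne_one
  have hu1 := hu.deg_ne_one
  obtain ⟨⟨a, ha, ha1, hva⟩, -⟩ := hv
  obtain ⟨-, b, hb, hb1, hub⟩ := hu
  have hpa : ((Γ u).1, (Γ v).2) ∈ ray (Γ v) (Γ a) := mem_ray_of_isHorizontalFrom hva h1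
  have hpb : ((Γ u).1, (Γ v).2) ∈ ray (Γ u) (Γ b) :=
    swap_mem_ray_swap.mp (mem_ray_of_isHorizontalFrom hub (z := (Γ v).2) h2)
  have hvb : v ≠ b := by rintro rfl; exact hv1 hb1
  have hau : a ≠ u := by rintro rfl; exact hu1 ha1
  have hab : a ≠ b := by rintro rfl; exact huv (eq_of_adj_of_deg_eq_one ha1 hb.symm ha.symm)
  exact (hΓ.disjoint_edgeDrawn ha hb huv.symm hvb hau hab).ne_of_mem
    (ray_subset_edgeDrawn ha1 hpa) (ray_subset_edgeDrawn hb1 hpb) rfl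

lemma IsConvexRectDrawing.subsingleton_setOf_isQuadFork (hΓ : IsConvexRectDrawing G Γ)
    (hG : G.Preconnected) (ε δ : ℝ) : {v | IsQuadFork G Γ v ε δ}.Subsingleton := by
  intro v hv u hu
  by_contra huv
  have hQv := hΓ.apply_notMem_quadrant hG hv u
  have hQu := hΓ.apply_notMem_quadrant hG hu v
  have hKv := hΓ.not_rays_meet_of_isQuadFork hv hu (Ne.symm huv)
  have hKu := hΓ.not_rays_meet_of_isQuadFork hu hv huv
  simp only [quadrant, Set.mem_ofPred_eq, not_and, not_lt, not_le] at hQv hQu hKv hKu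
  rcases lt_trichotomy (ε * ((Γ u).1 - (Γ v).1)) 0 with h | h | h
  · have := hKu (by linarith)
    have := hQu (by linarith)
    linarith
  · have := hKv h.ge
    have := hKu (by linarith)
    linarith
  · have := hKv h.le
    have := hQv h
    linarith

lemma IsConvexRectDrawing.sign_mul_pos_of_isLineFork (hΓ : IsConvexRectDrawing G Γ)
    (hG : G.Preconnected) {v x : V} {σ : ℝ} (h : IsLineFork G Γ v σ) (hx : deg G x ≠ 1)
    (hxv : x ≠ v) : 0 < σ * ((Γ x).2 - (Γ v).2) := by
  obtain ⟨a, b, c, ⟨ha, ha1, hva⟩, ⟨hb, hb1, hvb⟩, hc, hvc, hnbr⟩ := h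
  have hle : ¬ σ * ((Γ x).2 - (Γ v).2) < 0 := by
    refine hΓ.apply_notMem_of_barrier (P := {p | σ * (p.2 - (Γ v).2) < 0}) hG ha ha1 hb hb1
      (by simp) (fun y hy => ?_)
      (fun p q hpq hp hq => segment_inter_rays_nonempty_of_halfPlane hva hvb hpq hp hq) x
    rcases hnbr y hy with rfl | rfl | rfl
    · simp [hva.1]
    · simp [hvb.1]
    · exact not_lt.mpr hvc.2.le
  refine lt_of_le_of_ne (not_lt.mp hle) fun h0 => ?_
  have hx2 : (Γ x).2 = (Γ v).2 := by
    have hσ : σ ≠ 0 := by rintro rfl; simpa using hvc.2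
    linarith [(mul_eq_zero.mp h0.symm).resolve_left hσ]
  have hxa : x ≠ a := by rintro rfl; exact hx ha1
  have hxb : x ≠ b := by rintro rfl; exact hx hb1
  rcases mem_ray_union_ray hva hvb (Γ x).1 with hr | hr <;> rw [← hx2] at hr
  · exact hΓ.apply_notMem_ray hG ha ha1 hxv hxa hr
  · exact hΓ.apply_notMem_ray hG hb hb1 hxv hxb hr

lemma IsConvexRectDrawing.not_isHorizontalLeaf_swap_of_isLineFork (hΓ : IsConvexRectDrawing G Γ)
    (hG : G.Preconnected) {v u l : V} {σ : ℝ} (h : IsLineFork G Γ v σ) (hu : deg G u ≠ 1)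
    (huv : u ≠ v) : ¬ IsHorizontalLeaf G (Prod.swap ∘ Γ) u l (-σ) := by
  rintro ⟨hl, hl1, hul⟩
  have hside := hΓ.sign_mul_pos_of_isLineFork hG h hu huv
  have hv1 := h.deg_ne_one
  obtain ⟨a, b, -, ⟨ha, ha1, hva⟩, ⟨hb, hb1, hvb⟩, -⟩ := h
  have hp : ((Γ u).1, (Γ v).2) ∈ ray (Γ u) (Γ l) :=
    swap_mem_ray_swap.mp (mem_ray_of_isHorizontalFrom hul (z := (Γ v).2) (by
      simp only [Prod.fst_swap]
      linarith))
  have hlv : l ≠ v := by rintro rfl; exact hv1 hl1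
  rcases mem_ray_union_ray hva hvb (Γ u).1 with hq | hq
  · have hla : l ≠ a := by rintro rfl; exact huv (eq_of_adj_of_deg_eq_one ha1 hl.symm ha.symm)
    have hua : u ≠ a := by rintro rfl; exact hu ha1
    exact (hΓ.disjoint_edgeDrawn hl ha huv hua hlv hla).ne_of_mem
      (ray_subset_edgeDrawn hl1 hp) (ray_subset_edgeDrawn ha1 hq) rfl
  · have hlb : l ≠ b := by rintro rfl; exact huv (eq_of_adj_of_deg_eq_one hb1 hl.symm hb.symm)
    have hub : u ≠ b := by rintro rfl; exact hu hb1
    exact (hΓ.disjoint_edgeDrawn hl hb huv hub hlv hlb).ne_of_mem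
      (ray_subset_edgeDrawn hl1 hp) (ray_subset_edgeDrawn hb1 hq) rfl

lemma IsConvexRectDrawing.subsingleton_setOf_isLineFork (hΓ : IsConvexRectDrawing G Γ)
    (hG : G.Preconnected) (σ : ℝ) : {v | IsLineFork G Γ v σ}.Subsingleton := by
  intro v hv u hu
  by_contra huv
  have h1 := hΓ.sign_mul_pos_of_isLineFork hG hv hu.deg_ne_one (Ne.symm huv)
  have h2 := hΓ.sign_mul_pos_of_isLineFork hG hu hv.deg_ne_one huv
  linarith

end Forks

section Classification

variable {V : Type*} {G : SimpleGraph V} {Γ : V → ℝ × ℝ}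

def IsFork (G : SimpleGraph V) (v : V) : Prop :=
  IsKFork 2 G v ∨ IsKFork 3 G v

lemma IsFork.deg_ne_one {v : V} (h : IsFork G v) : deg G v ≠ 1 := by
  rcases h with ⟨h, -⟩ | ⟨h, -⟩ <;> omega

lemma exists_adj_ne_ne_of_deg_eq_three {v a b : V} (hv : deg G v = 3) (ha : G.Adj v a)
    (hb : G.Adj v b) (hab : a ≠ b) :
    ∃ c, G.Adj v c ∧ c ≠ a ∧ c ≠ b ∧ ∀ y, G.Adj v y → y = a ∨ y = b ∨ y = c := by
  have hsub : ({a, b} : Set V) ⊆ G.neighborSet v := by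
    rintro y (rfl | rfl)
    exacts [ha, hb]
  have hrest : (G.neighborSet v \ {a, b}).ncard = 1 := by
    rw [Set.ncard_sdiff hsub, Set.ncard_pair hab]
    unfold deg at hv
    omega
  obtain ⟨c, hc⟩ := Set.ncard_eq_one.mp hrest
  have hc' : c ∈ G.neighborSet v \ {a, b} := hc ▸ rfl
  simp only [Set.mem_sdiff, Set.mem_insert_iff, Set.mem_singleton_iff, not_or] at hc'
  refine ⟨c, hc'.1, hc'.2.1, hc'.2.2, fun y hy => ?_⟩
  by_contra! hy'
  have : y ∈ G.neighborSet v \ {a, b} := by simp [hy, hy'.1, hy'.2.1]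
  rw [hc] at this
  exact hy'.2.2 this

lemma IsConvexRectDrawing.isLineFork_of_isHorizontalLeaf (hΓ : IsConvexRectDrawing G Γ)
    {v a b : V} (hv : IsFork G v)
    (hleaves : ∀ x, G.Adj v x → deg G x = 1 → (Γ x).2 = (Γ v).2)
    (ha : IsHorizontalLeaf G Γ v a 1) (hb : IsHorizontalLeaf G Γ v b (-1)) :
    ∃ σ : ℝ, (σ = 1 ∨ σ = -1) ∧ IsLineFork G Γ v σ := by
  have hhoriz : ∀ x, G.Adj v x → (Γ x).2 = (Γ v).2 → x = a ∨ x = b := by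
    intro x hx hx2
    obtain ⟨s, rfl | rfl, hvx⟩ := hΓ.1.exists_isHorizontalFrom hx hx2
    · exact Or.inl (hΓ.1.eq_of_isHorizontalFrom hx ha.1 hvx ha.2.2)
    · exact Or.inr (hΓ.1.eq_of_isHorizontalFrom hx hb.1 hvx hb.2.2)
  have hab : a ≠ b := by
    rintro rfl
    linarith [ha.2.2.2, hb.2.2.2]
  have hdeg : deg G v = 3 := by
    have hleaf : {u | G.Adj v u ∧ deg G u = 1}.ncard ≤ 2 :=
      (Set.ncard_pair hab).symm ▸ Set.ncard_le_ncard fun x hx => hhoriz x hx.1 (hleaves x hx.1 hx.2)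
    rcases hv with ⟨h, -⟩ | ⟨-, h⟩ <;> omega
  obtain ⟨c, hc, hca, hcb, hnbr⟩ := exists_adj_ne_ne_of_deg_eq_three hdeg ha.1 hb.1 hab
  have hc1 : (Γ c).1 = (Γ v).1 :=
    ((hΓ.1.2.1 v c hc).resolve_right fun hc2 => (hhoriz c hc hc2.symm).elim hca hcb).symm
  obtain ⟨σ, hσ, hvc⟩ := hΓ.swap.1.exists_isHorizontalFrom hc hc1
  exact ⟨σ, hσ, a, b, c, ha, hb, hc, hvc, hnbr⟩

lemma IsConvexRectDrawing.exists_isLineFork (hΓ : IsConvexRectDrawing G Γ) {v : V}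
    (hv : IsFork G v) (hleaves : ∀ x, G.Adj v x → deg G x = 1 → (Γ x).2 = (Γ v).2) :
    ∃ σ : ℝ, (σ = 1 ∨ σ = -1) ∧ IsLineFork G Γ v σ := by
  have hpair : 1 < {u | G.Adj v u ∧ deg G u = 1}.ncard := by
    rcases hv with ⟨-, h⟩ | ⟨-, h⟩ <;> omega
  obtain ⟨a, ⟨ha, ha1⟩, b, ⟨hb, hb1⟩, hab⟩ :=
    (Set.one_lt_ncard (Set.finite_of_ncard_pos (by omega))).mp hpair
  obtain ⟨s, hs, hva⟩ := hΓ.1.exists_isHorizontalFrom ha (hleaves a ha ha1)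
  obtain ⟨t, ht, hvb⟩ := hΓ.1.exists_isHorizontalFrom hb (hleaves b hb hb1)
  rcases hs with rfl | rfl <;> rcases ht with rfl | rfl
  · exact absurd (hΓ.1.eq_of_isHorizontalFrom ha hb hva hvb) hab
  · exact hΓ.isLineFork_of_isHorizontalLeaf hv hleaves ⟨ha, ha1, hva⟩ ⟨hb, hb1, hvb⟩
  · exact hΓ.isLineFork_of_isHorizontalLeaf hv hleaves ⟨hb, hb1, hvb⟩ ⟨ha, ha1, hva⟩
  · exact absurd (hΓ.1.eq_of_isHorizontalFrom ha hb hva hvb) hab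

lemma IsConvexRectDrawing.isQuadFork_or_isLineFork (hΓ : IsConvexRectDrawing G Γ) {v : V}
    (hv : IsFork G v) :
    (∃ ε δ : ℝ, (ε = 1 ∨ ε = -1) ∧ (δ = 1 ∨ δ = -1) ∧ IsQuadFork G Γ v ε δ) ∨
    (∃ σ : ℝ, (σ = 1 ∨ σ = -1) ∧ IsLineFork G Γ v σ) ∨
    (∃ σ : ℝ, (σ = 1 ∨ σ = -1) ∧ IsLineFork G (Prod.swap ∘ Γ) v σ) := by
  by_cases hH : ∀ x, G.Adj v x → deg G x = 1 → (Γ x).2 = (Γ v).2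
  · exact Or.inr (Or.inl (hΓ.exists_isLineFork hv hH))
  by_cases hV : ∀ x, G.Adj v x → deg G x = 1 → (Γ x).1 = (Γ v).1
  · exact Or.inr (Or.inr (hΓ.swap.exists_isLineFork hv hV))
  push Not at hH hV
  obtain ⟨b, hb, hb1, hb2⟩ := hH
  obtain ⟨a, ha, ha1, ha2⟩ := hV
  obtain ⟨ε, hε, hva⟩ :=
    hΓ.1.exists_isHorizontalFrom ha (((hΓ.1.2.1 v a ha).resolve_left ha2.symm).symm)
  obtain ⟨δ, hδ, hvb⟩ :=
    hΓ.swap.1.exists_isHorizontalFrom hb (((hΓ.1.2.1 v b hb).resolve_right hb2.symm).symm)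
  exact Or.inl ⟨ε, δ, hε, hδ, ⟨a, ha, ha1, hva⟩, b, hb, hb1, hvb⟩

end Classification

lemma encard_le_four_of_subset_union {α : Type*} {s A B C D : Set α} (h : s ⊆ A ∪ B ∪ C ∪ D)
    (hA : A.Subsingleton) (hB : B.Subsingleton) (hC : C.Subsingleton) (hD : D.Subsingleton) :
    s.encard ≤ 4 := by
  rw [← Set.encard_le_one_iff_subsingleton] at hA hB hC hD
  calc s.encard ≤ (A ∪ B ∪ C ∪ D).encard := Set.encard_le_encard h
    _ ≤ A.encard + B.encard + C.encard + D.encard := by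
      refine (Set.encard_union_le _ _).trans (add_le_add_left ?_ _)
      refine (Set.encard_union_le _ _).trans (add_le_add_left ?_ _)
      exact Set.encard_union_le _ _
    _ ≤ 1 + 1 + 1 + 1 := by gcongr
    _ = 4 := by norm_num

section Counting

variable {V : Type*} {G : SimpleGraph V} {Γ : V → ℝ × ℝ}

lemma IsConvexRectDrawing.encard_setOf_isFork_le_of_isLineFork (hΓ : IsConvexRectDrawing G Γ)
    (hG : G.Preconnected) {v₀ : V} {σ : ℝ} (hσ : σ = 1 ∨ σ = -1) (h₀ : IsLineFork G Γ v₀ σ) :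
    {v | IsFork G v}.encard ≤ 4 := by
  refine encard_le_four_of_subset_union (A := {v | IsQuadFork G Γ v 1 σ})
    (B := {v | IsQuadFork G Γ v (-1) σ}) (C := {v | IsLineFork G Γ v σ})
    (D := {v | IsLineFork G Γ v (-σ)}) (fun w hw => ?_)
    (hΓ.subsingleton_setOf_isQuadFork hG _ _) (hΓ.subsingleton_setOf_isQuadFork hG _ _)
    (hΓ.subsingleton_setOf_isLineFork hG _) (hΓ.subsingleton_setOf_isLineFork hG _)
  simp only [Set.mem_union, Set.mem_ofPred_eq] at hw ⊢
  by_cases hw₀ : w = v₀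
  · exact Or.inl (Or.inr (hw₀ ▸ h₀))
  have hvert : ∀ l δ, (δ = 1 ∨ δ = -1) → IsHorizontalLeaf G (Prod.swap ∘ Γ) w l δ → δ = σ := by
    intro l δ hδ hl
    by_contra hne
    have hδσ : δ = -σ := by
      rcases hδ with rfl | rfl <;> rcases hσ with rfl | rfl <;>
        first | exact absurd rfl hne | norm_num
    exact hΓ.not_isHorizontalLeaf_swap_of_isLineFork hG h₀ hw.deg_ne_one hw₀ (hδσ ▸ hl)
  rcases hΓ.isQuadFork_or_isLineFork hw with ⟨ε, δ, hε, hδ, hq⟩ | ⟨τ, hτ, hl⟩ | ⟨τ, -, hl⟩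
  · obtain ⟨l, hl⟩ := hq.2
    obtain rfl := hvert l δ hδ hl
    rcases hε with rfl | rfl
    exacts [Or.inl (Or.inl (Or.inl hq)), Or.inl (Or.inl (Or.inr hq))]
  · have : τ = σ ∨ τ = -σ := by
      rcases hτ with rfl | rfl <;> rcases hσ with rfl | rfl <;> norm_num
    rcases this with rfl | rfl
    exacts [Or.inl (Or.inr hl), Or.inr hl]
  · obtain ⟨a, b, -, ha, hb, -⟩ := hl
    linarith [hvert a 1 (Or.inl rfl) ha, hvert b (-1) (Or.inr rfl) hb]

theorem IsConvexRectDrawing.encard_setOf_isFork_le (hΓ : IsConvexRectDrawing G Γ)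
    (hG : G.Preconnected) : {v | IsFork G v}.encard ≤ 4 := by
  by_cases hL : ∃ v σ, (σ = 1 ∨ σ = -1) ∧ IsLineFork G Γ v σ
  · obtain ⟨v, σ, hσ, hv⟩ := hL
    exact hΓ.encard_setOf_isFork_le_of_isLineFork hG hσ hv
  by_cases hL' : ∃ v σ, (σ = 1 ∨ σ = -1) ∧ IsLineFork G (Prod.swap ∘ Γ) v σ
  · obtain ⟨v, σ, hσ, hv⟩ := hL'
    exact hΓ.swap.encard_setOf_isFork_le_of_isLineFork hG hσ hv
  refine encard_le_four_of_subset_union (A := {v | IsQuadFork G Γ v 1 1})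
    (B := {v | IsQuadFork G Γ v 1 (-1)}) (C := {v | IsQuadFork G Γ v (-1) 1})
    (D := {v | IsQuadFork G Γ v (-1) (-1)}) (fun w hw => ?_)
    (hΓ.subsingleton_setOf_isQuadFork hG _ _) (hΓ.subsingleton_setOf_isQuadFork hG _ _)
    (hΓ.subsingleton_setOf_isQuadFork hG _ _) (hΓ.subsingleton_setOf_isQuadFork hG _ _)
  rcases hΓ.isQuadFork_or_isLineFork hw with ⟨ε, δ, hε, hδ, hq⟩ | ⟨σ, hσ, hl⟩ | ⟨σ, hσ, hl⟩
  · simp only [Set.mem_union, Set.mem_ofPred_eq]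
    rcases hε with rfl | rfl <;> rcases hδ with rfl | rfl <;> tauto
  · exact absurd ⟨w, σ, hσ, hl⟩ hL
  · exact absurd ⟨w, σ, hσ, hl⟩ hL'

end Counting

theorem stmt6_general {V : Type*} (G : SimpleGraph V)
    (htree : G.IsTree)
    (hdraw : HasConvexDrawing G) :
    {v | IsKFork 2 G v ∨ IsKFork 3 G v}.ncard ≤ 4 ∧
    ¬ ∃ (S : Fin 5 → Set V) (f : Fin 5 → V),
        (∀ i j, i ≠ j → Disjoint (S i) (S j)) ∧
        (∀ i, (G.induce (S i)).Connected) ∧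
        (∀ i, f i ∈ S i) ∧
        (∀ i, IsKFork 2 G (f i) ∨ IsKFork 3 G (f i)) := by
  obtain ⟨Γ, hΓ⟩ := hdraw
  have hF : {v | IsFork G v}.encard ≤ 4 := hΓ.encard_setOf_isFork_le htree.connected.preconnected
  refine ⟨(Set.encard_le_coe_iff_finite_ncard_le.mp hF).2, ?_⟩
  rintro ⟨S, f, hS, -, hf, hfork⟩
  have hinj : f.Injective := fun i j hij => by
    by_contra hne
    exact Set.disjoint_left.mp (hS i j hne) (hf i) (hij ▸ hf j)
  have h5 : (5 : ℕ∞) ≤ {v | IsFork G v}.encard := calc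
    (5 : ℕ∞) = ENat.card (Fin 5) := by simp
    _ ≤ (Set.range f).encard := hinj.encard_range
    _ ≤ _ := Set.encard_le_encard (Set.range_subset_iff.mpr hfork)
  exact absurd (h5.trans hF) (by norm_num)

/-- Let `T` be a tree with maximum degree at most 4 and no vertex of degree 2
that admits a convex rectilinear planar drawing. Then `T` has at most four
vertices that are 2-forks or 3-forks; in particular, `T` does not contain five
pairwise vertex-disjoint subtrees each containing a 2-fork or a 3-fork of `T`. -/
theorem stmt6 {V : Type*} [Fintype V] (G : SimpleGraph V)
    (htree : G.IsTree) (hdeg : ∀ v, deg G v ≤ 4) (hno2 : ∀ v, deg G v ≠ 2)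
    (hdraw : HasConvexDrawing G) :
    {v | IsKFork 2 G v ∨ IsKFork 3 G v}.ncard ≤ 4 ∧
    ¬ ∃ (S : Fin 5 → Set V) (f : Fin 5 → V),
        (∀ i j, i ≠ j → Disjoint (S i) (S j)) ∧
        (∀ i, (G.induce (S i)).Connected) ∧
        (∀ i, f i ∈ S i) ∧
        (∀ i, IsKFork 2 G (f i) ∨ IsKFork 3 G (f i)) :=
  stmt6_general G htree hdraw

end TurnRegular
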